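/- For the quantum folded T-system's lowest term: with k = (s-p)/2 ≥ 1, the exponent γ satisfying (m^{(i)}[p,s) · B^{-1}_{i,s-1} B^{-1}_{i,s-3} ⋯ B^{-1}_{i,p+1}) * m̲^{(i)}(p,s] = q^γ Π_{j : d(i,j)=1} m̲^{(j)}(p,s)^{-c_{j,i}} equals γ = (1/2) Σ_{j : d(i,j)=1} (-c_{j,i}) b̃_{j,i}(2k), and by the recurrence for η̃ this equals (1/2)(b̃_{i,i}(2k+1) + b̃_{i,i}(2k-1)). -/

import Mathlib

/-!
STATEMENT 16.  The lowest term of the quantum folded T-system: with `k = (s-p)/2 ≥ 1`,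
the exponent `γ` satisfying
`(m^{(i)}[p,s) · B⁻¹_{i,s-1} B⁻¹_{i,s-3} ⋯ B⁻¹_{i,p+1}) * m̲^{(i)}(p,s]
   = q^γ Π_{j : d(i,j)=1} m̲^{(j)}(p,s)^{-c_{j,i}}`
equals `γ = (1/2) Σ_{j : d(i,j)=1} (-c_{j,i}) b̃_{j,i}(2k)`, and by the recurrence for
`η̃` this equals `(1/2)(b̃_{i,i}(2k+1) + b̃_{i,i}(2k-1))`.

Encoding: as computed in the paper, the exponent `γ` picked out by the displayed equation
is the bilinear `N`-pairing
`γ = (1/2) Σ_{j : d(i,j)=1} (-c_{j,i}) Σ_{a=1}^k Σ_{b=1}^k N(j, p+2a-1; i, p+2b)`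
(the pairing of `Π_j m^{(j)}(p,s)^{-c_{j,i}}` against `m^{(i)}(p,s]`); the statement is
the chain of equalities
`γ = (1/2) Σ_j (-c_{j,i}) b̃_{j,i}(2k) = (1/2)(b̃_{i,i}(2k+1) + b̃_{i,i}(2k-1))`.
-/

noncomputable section

open scoped Classical

namespace Stmt16

/-- Formal Laurent series over `ℚ`. -/
abbrev K : Type := LaurentSeries ℚ

/-- The variable `t`. -/
def tv : K := HahnSeries.single 1 1

variable {I : Type*} [Fintype I] [DecidableEq I]

/-- The `t`-quantized Cartan matrix `Ⲝ(t)`. -/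
def uC (C : I → I → ℤ) : Matrix I I K :=
  Matrix.of fun i j => if i = j then tv + tv⁻¹ else (C i j : K)

/-- The symmetrized matrix `ⲜB(t) = Ⲝ(t) D⁻¹`. -/
def uB (C : I → I → ℤ) (d : I → ℤ) : Matrix I I K :=
  uC C * Matrix.diagonal fun i => ((d i : K))⁻¹

/-- Its inverse `B̃(t)`. -/
def tB (C : I → I → ℤ) (d : I → ℤ) : Matrix I I K := (uB C d)⁻¹

/-- The Laurent coefficients `b̃_{i,j}(u)`. -/
def btil (C : I → I → ℤ) (d : I → ℤ) (i j : I) (u : ℤ) : ℚ := ((tB C d) i j).coeff u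

/-- The exponent function `N(i,p;j,s)`. -/
def Nq (C : I → I → ℤ) (d : I → ℤ) (i : I) (p : ℤ) (j : I) (s : ℤ) : ℚ :=
  btil C d i j (p - s - 1) - btil C d i j (s - p - 1) -
    btil C d i j (p - s + 1) + btil C d i j (s - p + 1)

/-- The Dynkin diagram of `C`. -/
def dynkinGraph (C : I → I → ℤ) : SimpleGraph I :=
  SimpleGraph.fromRel fun i j => C i j ≠ 0


open Matrix

private lemma tv_inv' : tv⁻¹ = HahnSeries.single (-1 : ℤ) (1 : ℚ) := by
  have h : tv * HahnSeries.single (-1 : ℤ) (1 : ℚ) = 1 := by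
    rw [tv, HahnSeries.single_mul_single]
    norm_num [HahnSeries.single_zero_one]
  exact inv_eq_of_mul_eq_one_right h

private lemma coeff_mul_tv (x : K) (u : ℤ) : (x * tv).coeff u = x.coeff (u - 1) := by
  have := HahnSeries.coeff_mul_single_add (r := (1 : ℚ)) (x := x) (a := u - 1) (b := (1 : ℤ))
  simpa [tv] using this

private lemma coeff_mul_tvinv (x : K) (u : ℤ) : (x * tv⁻¹).coeff u = x.coeff (u + 1) := by
  rw [tv_inv']
  have := HahnSeries.coeff_mul_single_add (r := (1 : ℚ)) (x := x) (a := u + 1) (b := (-1 : ℤ))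
  simpa using this

private lemma intCast_K' (n : ℤ) : (n : K) = HahnSeries.single (0 : ℤ) (n : ℚ) := by
  rw [← HahnSeries.C_apply, map_intCast]

private lemma coeff_intCast_mul (n : ℤ) (x : K) (u : ℤ) :
    ((n : K) * x).coeff u = (n : ℚ) * x.coeff u := by
  rw [intCast_K', HahnSeries.coeff_single_zero_mul]

private lemma coeff_intCast (n : ℤ) (u : ℤ) :
    ((n : K)).coeff u = if u = 0 then (n : ℚ) else 0 := by
  rw [intCast_K']
  by_cases h : u = 0 <;> simp [h, HahnSeries.coeff_single]

private lemma intCast_ne_zero_K {n : ℤ} (h : n ≠ 0) : (n : K) ≠ 0 := by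
  rw [intCast_K']
  exact HahnSeries.single_ne_zero (by exact_mod_cast h)

/-- coefficient extraction as an additive monoid hom -/
private def coeffHom (u : ℤ) : K →+ ℚ where
  toFun x := x.coeff u
  map_zero' := rfl
  map_add' _ _ := HahnSeries.coeff_add

section Aux
variable (C : I → I → ℤ) (d : I → ℤ)

private lemma tB_mul_uC (hd : ∀ i, 0 < d i) (hdet : IsUnit (uB C d).det) :
    tB C d * uC C = Matrix.diagonal (fun i => ((d i : K))) := by
  have h1 : tB C d * uB C d = 1 := Matrix.nonsing_inv_mul _ hdet
  have h2 : uB C d * Matrix.diagonal (fun i => ((d i : K))) = uC C := by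
    rw [uB, Matrix.mul_assoc, Matrix.diagonal_mul_diagonal]
    have he : (fun i => ((d i : K))⁻¹ * (d i : K)) = fun _ => (1 : K) :=
      funext fun i => inv_mul_cancel₀ (intCast_ne_zero_K (hd i).ne')
    rw [he, Matrix.diagonal_one, Matrix.mul_one]
  calc tB C d * uC C = tB C d * (uB C d * Matrix.diagonal (fun i => ((d i : K)))) := by rw [h2]
    _ = (tB C d * uB C d) * Matrix.diagonal (fun i => ((d i : K))) := by rw [Matrix.mul_assoc]
    _ = Matrix.diagonal (fun i => ((d i : K))) := by rw [h1, Matrix.one_mul]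

/-- the key recurrence for the coefficients of the inverse matrix -/
private lemma recur (hd : ∀ i, 0 < d i) (hdet : IsUnit (uB C d).det) (i j : I) (u : ℤ) :
    btil C d i j (u - 1) + btil C d i j (u + 1)
      + ∑ l, (if l = j then 0 else (C l j : ℚ)) * btil C d i l u
    = (if i = j then (d i : ℚ) else 0) * (if u = 0 then 1 else 0) := by
  have hentry : ∑ l, (tB C d) i l * (uC C) l j
      = Matrix.diagonal (fun i => ((d i : K))) i j := by
    have h := tB_mul_uC C d hd hdet
    have := congrFun (congrFun (congrArg (fun M => (M : Matrix I I K)) h) i) j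
    simpa [Matrix.mul_apply] using this
  have hcoeff := congrArg (coeffHom u) hentry
  rw [map_sum] at hcoeff
  have hterm : ∀ l, coeffHom u ((tB C d) i l * (uC C) l j)
      = (if l = j then btil C d i j (u - 1) + btil C d i j (u + 1) else 0)
        + (if l = j then 0 else (C l j : ℚ) * btil C d i l u) := by
    intro l
    by_cases hl : l = j
    · subst hl
      simp only [if_pos rfl, add_zero, uC, Matrix.of_apply, ite_true, coeffHom,
        AddMonoidHom.coe_mk, ZeroHom.coe_mk]
      rw [mul_add, HahnSeries.coeff_add, coeff_mul_tv, coeff_mul_tvinv]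
      rfl
    · simp only [if_neg hl, zero_add, uC, Matrix.of_apply]
      rw [coeffHom]
      simp only [AddMonoidHom.coe_mk, ZeroHom.coe_mk, if_neg hl]
      rw [mul_comm, coeff_intCast_mul]
      rfl
  rw [Finset.sum_congr rfl (fun l _ => hterm l), Finset.sum_add_distrib,
    Finset.sum_ite_eq' Finset.univ j] at hcoeff
  simp only [Finset.mem_univ, if_pos] at hcoeff
  have hrhs : coeffHom u (Matrix.diagonal (fun i => ((d i : K))) i j)
      = (if i = j then (d i : ℚ) else 0) * (if u = 0 then 1 else 0) := by
    rw [Matrix.diagonal_apply, coeffHom]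
    simp only [AddMonoidHom.coe_mk, ZeroHom.coe_mk]
    by_cases hij : i = j
    · rw [if_pos hij, if_pos hij, coeff_intCast]
      by_cases hu : u = 0 <;> simp [hu]
    · simp [hij]
  rw [hrhs] at hcoeff
  have hsum : ∀ l : I, (if l = j then 0 else (C l j : ℚ)) * btil C d i l u
      = if l = j then 0 else (C l j : ℚ) * btil C d i l u := by
    intro l; split <;> simp
  rw [Finset.sum_congr rfl (fun l _ => hsum l)]
  exact hcoeff

/-- vanishing of all coefficients at nonpositive exponents -/
private lemma vanish (hd : ∀ i, 0 < d i) (hdet : IsUnit (uB C d).det)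
    (i : I) : ∀ u : ℤ, u ≤ 0 → ∀ j, btil C d i j u = 0 := by
  have hne : (Finset.univ : Finset I).Nonempty := ⟨i, Finset.mem_univ i⟩
  set g : I → ℤ := fun j => if h : tB C d i j = 0 then 0 else (tB C d i j).order with hg
  set N : ℤ := Finset.univ.inf' hne g with hNdef
  have hN : ∀ (j : I) (u : ℤ), u < N → btil C d i j u = 0 := by
    intro j u hu
    by_cases h : tB C d i j = 0
    · simp [btil, h]
    · apply HahnSeries.coeff_eq_zero_of_lt_order
      have h1 : N ≤ g j := Finset.inf'_le g (Finset.mem_univ j)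
      rw [hg] at h1
      simp only [dif_neg h] at h1
      exact lt_of_lt_of_le hu h1
  have key : ∀ n : ℕ, ∀ j, ∀ u : ℤ, u ≤ 0 → u < N + n → btil C d i j u = 0 := by
    intro n
    induction n with
    | zero => intro j u _ hu; exact hN j u (by omega)
    | succ n ih =>
      intro j u hu0 hu
      by_cases hcase : u < N + n
      · exact ih j u hu0 hcase
      · have hrec := recur C d hd hdet i j (u - 1)
        have h1 : btil C d i j (u - 1 - 1) = 0 := ih j _ (by omega) (by omega)
        have h2 : ∀ l, btil C d i l (u - 1) = 0 := fun l => ih l _ (by omega) (by omega)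
        have h3 : (u : ℤ) - 1 + 1 = u := by ring
        rw [h1, h3, if_neg (by omega : ¬ (u - 1 = 0))] at hrec
        have h4 : ∑ l, (if l = j then 0 else (C l j : ℚ)) * btil C d i l (u - 1) = 0 :=
          Finset.sum_eq_zero fun l _ => by rw [h2 l, mul_zero]
        rw [h4] at hrec
        linarith
  intro u hu j
  exact key ((u - N).toNat + 1) j u hu (by omega)

/-- symmetry of `uB` -/
private lemma uB_symm (hd : ∀ i, 0 < d i) (hsym : ∀ i j, d i * C i j = d j * C j i) :
    (uB C d)ᵀ = uB C d := by
  refine Matrix.ext fun i j => ?_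
  simp only [Matrix.transpose_apply, uB, Matrix.mul_diagonal, uC, Matrix.of_apply]
  by_cases hij : i = j
  · subst hij; rfl
  · rw [if_neg hij, if_neg (Ne.symm hij)]
    have hdi : ((d i : K)) ≠ 0 := intCast_ne_zero_K (hd i).ne'
    have hdj : ((d j : K)) ≠ 0 := intCast_ne_zero_K (hd j).ne'
    have h : ((d j : K)) * (C j i : K) = ((d i : K)) * (C i j : K) := by
      exact_mod_cast congrArg (fun n : ℤ => (n : K)) (hsym j i)
    field_simp
    linear_combination h

private lemma btil_symm (hd : ∀ i, 0 < d i) (hsym : ∀ i j, d i * C i j = d j * C j i)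
    (i j : I) (u : ℤ) : btil C d i j u = btil C d j i u := by
  have h : (tB C d)ᵀ = tB C d := by
    rw [tB, Matrix.transpose_nonsing_inv, uB_symm C d hd hsym]
  have := congrFun (congrFun (congrArg (fun M => (M : Matrix I I K)) h) j) i
  simp only [Matrix.transpose_apply] at this
  rw [btil, btil, ← this]

end Aux

/-- telescoping sum -/
private lemma tele (h : ℤ → ℚ) :
    ∀ k : ℕ, ∑ b ∈ Finset.Icc 1 k, (h b - h ((b : ℤ) - 1)) = h k - h 0 := by
  intro k
  induction k with
  | zero => simp
  | succ n ih =>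
    rw [Finset.sum_Icc_succ_top (by omega : 1 ≤ n + 1), ih]
    have h1 : ((n : ℤ) + 1) - 1 = n := by ring
    push_cast
    rw [h1]
    ring

/-- the key double telescoping sum -/
private lemma double (f : ℤ → ℚ) (k : ℕ) :
    ∑ a ∈ Finset.Icc 1 k, ∑ b ∈ Finset.Icc 1 k,
      (f ((a : ℤ) - b - 1) - f ((b : ℤ) - a) - f ((a : ℤ) - b) + f ((b : ℤ) - a + 1))
    = f k - 2 * f 0 + f (-(k : ℤ)) := by
  have inner1 : ∀ a : ℤ, ∑ b ∈ Finset.Icc 1 k, (f (a - b - 1) - f (a - b))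
      = f (a - k - 1) - f (a - 1) := by
    intro a
    have ht := tele (fun b => f (a - b - 1)) k
    rw [show f (a - (k:ℤ) - 1) - f (a - 1) = f (a - (k:ℤ) - 1) - f (a - (0:ℤ) - 1) by norm_num,
      ← ht]
    refine Finset.sum_congr rfl fun b _ => ?_
    have hb : a - ((b : ℤ) - 1) - 1 = a - b := by ring
    rw [hb]
  have inner2 : ∀ a : ℤ, ∑ b ∈ Finset.Icc 1 k, (f (a - b + 1) - f (a - b))
      = f a - f (a - k) := by
    intro a
    have ht := tele (fun b => -(f (a - b))) k
    rw [show f a - f (a - (k:ℤ)) = -(f (a - (k : ℤ))) - -(f (a - (0:ℤ))) by norm_num; ring,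
      ← ht]
    refine Finset.sum_congr rfl fun b _ => ?_
    have hb : a - ((b : ℤ) - 1) = a - b + 1 := by ring
    rw [hb]
    ring
  calc ∑ a ∈ Finset.Icc 1 k, ∑ b ∈ Finset.Icc 1 k,
        (f ((a : ℤ) - b - 1) - f ((b : ℤ) - a) - f ((a : ℤ) - b) + f ((b : ℤ) - a + 1))
      = ∑ a ∈ Finset.Icc 1 k, ∑ b ∈ Finset.Icc 1 k,
        ((f ((a : ℤ) - b - 1) - f ((a : ℤ) - b)) + (f ((b : ℤ) - a + 1) - f ((b : ℤ) - a))) :=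
        Finset.sum_congr rfl fun a _ => Finset.sum_congr rfl fun b _ => by ring
    _ = (∑ a ∈ Finset.Icc 1 k, ∑ b ∈ Finset.Icc 1 k, (f ((a : ℤ) - b - 1) - f ((a : ℤ) - b)))
        + ∑ a ∈ Finset.Icc 1 k, ∑ b ∈ Finset.Icc 1 k, (f ((b : ℤ) - a + 1) - f ((b : ℤ) - a)) := by
        rw [← Finset.sum_add_distrib]
        exact Finset.sum_congr rfl fun a _ => Finset.sum_add_distrib
    _ = (∑ a ∈ Finset.Icc 1 k, ∑ b ∈ Finset.Icc 1 k, (f ((a : ℤ) - b - 1) - f ((a : ℤ) - b)))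
        + ∑ a ∈ Finset.Icc 1 k, ∑ b ∈ Finset.Icc 1 k, (f ((a : ℤ) - b + 1) - f ((a : ℤ) - b)) := by
        rw [Finset.sum_comm (s := Finset.Icc 1 k) (t := Finset.Icc 1 k)
          (f := fun a b => f ((b : ℤ) - a + 1) - f ((b : ℤ) - a))]
    _ = ∑ a ∈ Finset.Icc 1 k,
        ((f ((a : ℤ) - k - 1) - f ((a : ℤ) - 1)) + (f ((a : ℤ)) - f ((a : ℤ) - k))) := by
        rw [← Finset.sum_add_distrib]
        exact Finset.sum_congr rfl fun a _ => by rw [inner1 ((a : ℕ) : ℤ), inner2 ((a : ℕ) : ℤ)]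
    _ = ∑ a ∈ Finset.Icc 1 k,
        ((fun x => f x - f (x - k)) ((a : ℕ) : ℤ)
          - (fun x => f x - f (x - k)) (((a : ℕ) : ℤ) - 1)) := by
        refine Finset.sum_congr rfl fun a _ => ?_
        simp only
        have hb : ((a : ℕ) : ℤ) - 1 - (k : ℤ) = ((a : ℕ) : ℤ) - k - 1 := by ring
        rw [hb]
        ring
    _ = (fun x => f x - f (x - k)) ((k : ℕ) : ℤ) - (fun x => f x - f (x - k)) 0 :=
        tele (fun x => f x - f (x - k)) k
    _ = f k - 2 * f 0 + f (-(k : ℤ)) := by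
        simp only
        rw [show (k : ℤ) - (k : ℤ) = 0 by ring, show (0 : ℤ) - (k : ℤ) = -(k:ℤ) by ring]
        ring

theorem stmt16
    (C : I → I → ℤ) (d : I → ℤ)
    (hdiag : ∀ i, C i i = 2)
    (hoff : ∀ i j, i ≠ j → C i j ≤ 0)
    (hd : ∀ i, 0 < d i)
    (hsym : ∀ i j, d i * C i j = d j * C j i)
    (hconn : (dynkinGraph C).Connected)
    (hposdef : ∀ v : I → ℚ, v ≠ 0 → 0 < ∑ i, ∑ j, v i * ((d i * C i j : ℤ) : ℚ) * v j)
    (hdet : IsUnit (uB C d).det)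
    (i : I) (p : ℤ) (k : ℕ) (hk : 1 ≤ k) :
    ((1 : ℚ) / 2) * ∑ j ∈ Finset.univ.filter (fun j => (dynkinGraph C).Adj j i),
          (-(C j i) : ℚ) * ∑ a ∈ Finset.Icc 1 k, ∑ b ∈ Finset.Icc 1 k,
            Nq C d j (p + 2 * (a : ℤ) - 1) i (p + 2 * (b : ℤ)) =
        ((1 : ℚ) / 2) * ∑ j ∈ Finset.univ.filter (fun j => (dynkinGraph C).Adj j i),
          (-(C j i) : ℚ) * btil C d j i (2 * (k : ℤ)) ∧
      ((1 : ℚ) / 2) * ∑ j ∈ Finset.univ.filter (fun j => (dynkinGraph C).Adj j i),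
          (-(C j i) : ℚ) * btil C d j i (2 * (k : ℤ)) =
        ((1 : ℚ) / 2) *
          (btil C d i i (2 * (k : ℤ) + 1) + btil C d i i (2 * (k : ℤ) - 1)) := by
  have hadj : ∀ l, (dynkinGraph C).Adj l i ↔ (l ≠ i ∧ C l i ≠ 0) := by
    intro l
    rw [dynkinGraph, SimpleGraph.fromRel_adj]
    constructor
    · rintro ⟨hne, h | h⟩
      · exact ⟨hne, h⟩
      · refine ⟨hne, fun hz => h ?_⟩
        have h2 := hsym i l
        rw [hz, mul_zero] at h2
        exact (mul_eq_zero.mp h2).resolve_left (hd i).ne'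
    · rintro ⟨hne, h⟩; exact ⟨hne, Or.inl h⟩
  constructor
  · -- first equality
    congr 1
    refine Finset.sum_congr rfl fun j hj => ?_
    obtain ⟨hne, hC⟩ := (hadj j).mp (Finset.mem_filter.mp hj).2
    congr 1
    set f : ℤ → ℚ := fun n => btil C d j i (2 * n) with hf
    have hstep : ∀ (a b : ℕ), Nq C d j (p + 2*(a:ℤ) - 1) i (p + 2*(b:ℤ))
        = f ((a:ℤ) - b - 1) - f ((b:ℤ) - a) - f ((a:ℤ) - b) + f ((b:ℤ) - a + 1) := by
      intro a b
      have e1 : (p + 2*(a:ℤ) - 1) - (p + 2*(b:ℤ)) - 1 = 2*((a:ℤ) - b - 1) := by ring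
      have e2 : (p + 2*(b:ℤ)) - (p + 2*(a:ℤ) - 1) - 1 = 2*((b:ℤ) - a) := by ring
      have e3 : (p + 2*(a:ℤ) - 1) - (p + 2*(b:ℤ)) + 1 = 2*((a:ℤ) - b) := by ring
      have e4 : (p + 2*(b:ℤ)) - (p + 2*(a:ℤ) - 1) + 1 = 2*((b:ℤ) - a + 1) := by ring
      rw [Nq, e1, e2, e3, e4]
    calc ∑ a ∈ Finset.Icc 1 k, ∑ b ∈ Finset.Icc 1 k,
          Nq C d j (p + 2*(a:ℤ) - 1) i (p + 2*(b:ℤ))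
        = ∑ a ∈ Finset.Icc 1 k, ∑ b ∈ Finset.Icc 1 k,
          (f ((a:ℤ) - b - 1) - f ((b:ℤ) - a) - f ((a:ℤ) - b) + f ((b:ℤ) - a + 1)) :=
          Finset.sum_congr rfl fun a _ => Finset.sum_congr rfl fun b _ => hstep a b
      _ = f k - 2 * f 0 + f (-(k:ℤ)) := double f k
      _ = btil C d j i (2 * (k:ℤ)) := by
          have hz1 : f 0 = 0 := vanish C d hd hdet j (2 * 0) (by omega) i
          have hz2 : f (-(k:ℤ)) = 0 := vanish C d hd hdet j (2 * (-(k:ℤ))) (by omega) i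
          rw [hz1, hz2, hf]
          ring
  · -- second equality
    have hrec := recur C d hd hdet i i (2*(k:ℤ))
    rw [if_neg (by omega : ¬ (2*(k:ℤ) = 0)), mul_zero] at hrec
    have hsplit : ∑ l, (if l = i then 0 else (C l i : ℚ)) * btil C d i l (2*(k:ℤ))
        = ∑ l ∈ Finset.univ.filter (fun l => (dynkinGraph C).Adj l i),
            ((C l i : ℚ)) * btil C d l i (2*(k:ℤ)) := by
      rw [Finset.sum_filter]
      refine Finset.sum_congr rfl fun l _ => ?_
      by_cases hli : l = i
      · subst hli
        rw [if_pos rfl, if_neg (by simp [hadj]), zero_mul]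
      · rw [if_neg hli]
        by_cases hC : C l i = 0
        · rw [if_neg (by simp [hadj, hC]), hC]
          simp
        · rw [if_pos ((hadj l).mpr ⟨hli, hC⟩), btil_symm C d hd hsym i l]
    rw [hsplit] at hrec
    have h5 : ∑ j ∈ Finset.univ.filter (fun j => (dynkinGraph C).Adj j i),
          (-(C j i) : ℚ) * btil C d j i (2 * (k : ℤ))
        = - ∑ j ∈ Finset.univ.filter (fun j => (dynkinGraph C).Adj j i),
          ((C j i : ℚ)) * btil C d j i (2 * (k : ℤ)) := by
      rw [← Finset.sum_neg_distrib]
      exact Finset.sum_congr rfl fun j _ => by push_cast; ring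
    rw [h5]
    linarith

end Stmt16
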